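/- arXiv:cs/0604034 — 8 statements merged into one kernel-verified Lean document; each statement's English description precedes it below -/
import Mathlib

section
/- Up to isomorphism of free (unrooted, unlabeled) trees, there is exactly one 1-bisectable tree, exactly one 2-bisectable tree, and exactly three 3-bisectable trees. -/
/-- The tree (graph) formed by connecting a graph `G₁` on `V₁` and a graph `G₂` on `V₂`
by a single edge joining the vertex `u : V₁` to the vertex `v : V₂`. -/
def joinGraph {V₁ V₂ : Type} (G₁ : SimpleGraph V₁) (G₂ : SimpleGraph V₂) (u : V₁) (v : V₂) :
    SimpleGraph (V₁ ⊕ V₂) where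
  Adj x y :=
    match x, y with
    | Sum.inl a, Sum.inl b => G₁.Adj a b
    | Sum.inr a, Sum.inr b => G₂.Adj a b
    | Sum.inl a, Sum.inr b => a = u ∧ b = v
    | Sum.inr a, Sum.inl b => a = v ∧ b = u
  symm := ⟨by
    rintro (a | a) (b | b) h
    · exact G₁.adj_symm h
    · exact ⟨h.2, h.1⟩
    · exact ⟨h.2, h.1⟩
    · exact G₂.adj_symm h⟩
  loopless := ⟨by
    rintro (a | a) h
    · exact G₁.ne_of_adj h rfl
    · exact G₂.ne_of_adj h rfl⟩

/-- A `0`-bisectable tree is a tree with a single vertex; an `(i+1)`-bisectable tree is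
formed by connecting two `i`-bisectable trees by a single edge joining any vertex of one
to any vertex of the other. -/
def IsBisectable : (i : ℕ) → {V : Type} → [Fintype V] → SimpleGraph V → Prop
  | 0, V, _, _ => Fintype.card V = 1
  | (i + 1), _, _, G =>
      ∃ (V₁ V₂ : Type) (h₁ : Fintype V₁) (h₂ : Fintype V₂)
        (G₁ : SimpleGraph V₁) (G₂ : SimpleGraph V₂) (u : V₁) (v : V₂)
        (e : _ ≃ (V₁ ⊕ V₂)),
        (∀ x y, G.Adj x y ↔ (joinGraph G₁ G₂ u v).Adj (e x) (e y)) ∧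
        (@IsBisectable i V₁ h₁ G₁) ∧ (@IsBisectable i V₂ h₂ G₂)


section Aux

open SimpleGraph

instance joinDec {V₁ V₂ : Type} (G₁ : SimpleGraph V₁) (G₂ : SimpleGraph V₂)
    [DecidableRel G₁.Adj] [DecidableRel G₂.Adj] [DecidableEq V₁] [DecidableEq V₂]
    (u : V₁) (v : V₂) : DecidableRel (joinGraph G₁ G₂ u v).Adj := fun x y =>
  match x, y with
  | Sum.inl a, Sum.inl b => inferInstanceAs (Decidable (G₁.Adj a b))
  | Sum.inr a, Sum.inr b => inferInstanceAs (Decidable (G₂.Adj a b))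
  | Sum.inl a, Sum.inr b => inferInstanceAs (Decidable (a = u ∧ b = v))
  | Sum.inr a, Sum.inl b => inferInstanceAs (Decidable (a = v ∧ b = u))

def relabel {V W : Type} (G : SimpleGraph V) (e : V ≃ W) : SimpleGraph W where
  Adj x y := G.Adj (e.symm x) (e.symm y)
  symm := ⟨fun x y h => G.adj_symm h⟩
  loopless := ⟨fun x h => G.ne_of_adj h rfl⟩

instance relabelDec {V W : Type} (G : SimpleGraph V) [DecidableRel G.Adj] (e : V ≃ W) :
    DecidableRel (relabel G e).Adj := fun x y =>
  inferInstanceAs (Decidable (G.Adj (e.symm x) (e.symm y)))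

def relabelIso {V W : Type} (G : SimpleGraph V) (e : V ≃ W) : G ≃g relabel G e :=
  ⟨e, by simp [relabel]⟩

theorem isBisectable_congr {i : ℕ} {V W : Type} [Fintype V] [Fintype W]
    {G : SimpleGraph V} {H : SimpleGraph W} (φ : G ≃g H) :
    IsBisectable i G → IsBisectable i H := by
  cases i with
  | zero =>
    intro h
    show Fintype.card W = 1
    rw [← Fintype.card_congr φ.toEquiv]; exact h
  | succ i =>
    rintro ⟨V₁, V₂, h₁, h₂, G₁, G₂, u, v, e, he, b₁, b₂⟩
    exact ⟨V₁, V₂, h₁, h₂, G₁, G₂, u, v, φ.symm.toEquiv.trans e, fun x y => by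
      rw [← φ.symm.map_rel_iff]; exact he _ _, b₁, b₂⟩

theorem isBisectable_join {i : ℕ} {V₁ V₂ : Type} [Fintype V₁] [Fintype V₂]
    {G₁ : SimpleGraph V₁} {G₂ : SimpleGraph V₂} (u : V₁) (v : V₂)
    (h₁ : IsBisectable i G₁) (h₂ : IsBisectable i G₂) :
    IsBisectable (i + 1) (joinGraph G₁ G₂ u v) :=
  ⟨V₁, V₂, inferInstance, inferInstance, G₁, G₂, u, v, Equiv.refl _,
    fun _ _ => Iff.rfl, h₁, h₂⟩

def isoOfSpec {V V₁ V₂ : Type} {G : SimpleGraph V} {G₁ : SimpleGraph V₁} {G₂ : SimpleGraph V₂}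
    {u : V₁} {v : V₂} (e : V ≃ (V₁ ⊕ V₂))
    (he : ∀ x y, G.Adj x y ↔ (joinGraph G₁ G₂ u v).Adj (e x) (e y)) :
    G ≃g joinGraph G₁ G₂ u v :=
  ⟨e, @fun a b => (he a b).symm⟩

def joinIso {V₁ V₂ W₁ W₂ : Type} {G₁ : SimpleGraph V₁} {G₂ : SimpleGraph V₂}
    {H₁ : SimpleGraph W₁} {H₂ : SimpleGraph W₂} (φ₁ : G₁ ≃g H₁) (φ₂ : G₂ ≃g H₂)
    (u : V₁) (v : V₂) :
    joinGraph G₁ G₂ u v ≃g joinGraph H₁ H₂ (φ₁ u) (φ₂ v) where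
  toEquiv := Equiv.sumCongr φ₁.toEquiv φ₂.toEquiv
  map_rel_iff' := by
    rintro (a | a) (b | b) <;>
      simp [joinGraph, Equiv.sumCongr_apply, φ₁.map_rel_iff, φ₂.map_rel_iff]

def joinIso' {V₁ V₂ W₁ W₂ : Type} {G₁ : SimpleGraph V₁} {G₂ : SimpleGraph V₂}
    {H₁ : SimpleGraph W₁} {H₂ : SimpleGraph W₂} (φ₁ : G₁ ≃g H₁) (φ₂ : G₂ ≃g H₂)
    {u : V₁} {v : V₂} {u' : W₁} {v' : W₂} (hu : φ₁ u = u') (hv : φ₂ v = v') :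
    joinGraph G₁ G₂ u v ≃g joinGraph H₁ H₂ u' v' := by
  subst hu; subst hv; exact joinIso φ₁ φ₂ u v

def joinComm {V₁ V₂ : Type} (G₁ : SimpleGraph V₁) (G₂ : SimpleGraph V₂) (u : V₁) (v : V₂) :
    joinGraph G₁ G₂ u v ≃g joinGraph G₂ G₁ v u :=
  ⟨Equiv.sumComm _ _, by rintro (a | a) (b | b) <;> simp [joinGraph] <;> tauto⟩

def topIso {α β : Type} (σ : α ≃ β) : (⊤ : SimpleGraph α) ≃g (⊤ : SimpleGraph β) :=
  ⟨σ, by simp⟩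

end Aux
section Classify

open SimpleGraph

theorem classify1 {V : Type} [Fintype V] {G : SimpleGraph V} (h : IsBisectable 1 G) (u : V) :
    ∃ φ : G ≃g (⊤ : SimpleGraph (Fin 2)), φ u = 0 := by
  obtain ⟨V₁, V₂, h₁, h₂, G₁, G₂, a, b, e, he, b₁, b₂⟩ := h
  obtain ⟨x₁, hx₁⟩ := (@Fintype.card_eq_one_iff V₁ h₁).mp b₁
  obtain ⟨x₂, hx₂⟩ := (@Fintype.card_eq_one_iff V₂ h₂).mp b₂
  have hJ : ∀ p q : V₁ ⊕ V₂, (joinGraph G₁ G₂ a b).Adj p q ↔ p ≠ q := by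
    rintro (p | p) (q | q)
    · have : p = q := (hx₁ p).trans (hx₁ q).symm
      subst this
      simp [joinGraph]
    · simp only [joinGraph, ne_eq]
      constructor
      · rintro - h; exact Sum.inl_ne_inr h
      · intro; exact ⟨(hx₁ p).trans (hx₁ a).symm, (hx₂ q).trans (hx₂ b).symm⟩
    · simp only [joinGraph, ne_eq]
      constructor
      · rintro - h; exact Sum.inr_ne_inl h
      · intro; exact ⟨(hx₂ p).trans (hx₂ b).symm, (hx₁ q).trans (hx₁ a).symm⟩
    · have : p = q := (hx₂ p).trans (hx₂ q).symm
      subst this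
      simp [joinGraph]
  have hG : ∀ x y, G.Adj x y ↔ x ≠ y := by
    intro x y
    rw [he x y, hJ]
    simp
  have hcard : Fintype.card V = 2 := by
    rw [Fintype.card_congr e, @Fintype.card_sum V₁ V₂ h₁ h₂, b₁, b₂]
  let ε : V ≃ Fin 2 := Fintype.equivFinOfCardEq hcard
  let φ : G ≃g (⊤ : SimpleGraph (Fin 2)) :=
    ⟨ε, by intro x y; simp [hG, ε.apply_eq_iff_eq]⟩
  refine ⟨φ.trans (topIso (Equiv.swap (φ u) 0)), ?_⟩
  exact Equiv.swap_apply_left (φ u) 0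

theorem top2_bisectable : IsBisectable 1 (⊤ : SimpleGraph (Fin 2)) := by
  have h0 : IsBisectable 0 (⊥ : SimpleGraph (Fin 1)) := rfl
  have h1 := isBisectable_join (0 : Fin 1) (0 : Fin 1) h0 h0
  refine isBisectable_congr ?_ h1
  exact ⟨⟨fun x => match x with | Sum.inl _ => 0 | Sum.inr _ => 1,
      fun y => if y = 0 then Sum.inl 0 else Sum.inr 0, by decide, by decide⟩, by decide⟩

end Classify
section ClassifyTwo

open SimpleGraph

def P4 : SimpleGraph (Fin 4) where
  Adj x y := x.val + 1 = y.val ∨ y.val + 1 = x.val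
  symm := ⟨by intro x y h; tauto⟩
  loopless := ⟨by intro x h; omega⟩

instance : DecidableRel P4.Adj := fun x y =>
  inferInstanceAs (Decidable (x.val + 1 = y.val ∨ y.val + 1 = x.val))

def e24 : (Fin 2 ⊕ Fin 2) ≃ Fin 4 where
  toFun x := match x with
    | Sum.inl a => if a = 0 then 1 else 0
    | Sum.inr a => if a = 0 then 2 else 3
  invFun y := if y = 0 then Sum.inl 1 else if y = 1 then Sum.inl 0
    else if y = 2 then Sum.inr 0 else Sum.inr 1
  left_inv := by decide
  right_inv := by decide

def joinTopIsoP4 : joinGraph (⊤ : SimpleGraph (Fin 2)) (⊤ : SimpleGraph (Fin 2)) 0 0 ≃g P4 :=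
  ⟨e24, by decide⟩

def rev4 : P4 ≃g P4 :=
  ⟨⟨fun x => 3 - x, fun x => 3 - x, by decide, by decide⟩, by decide⟩

theorem P4_bisectable : IsBisectable 2 P4 :=
  isBisectable_congr joinTopIsoP4
    (isBisectable_join 0 0 top2_bisectable top2_bisectable)

theorem classify2 {V : Type} [Fintype V] {G : SimpleGraph V} (h : IsBisectable 2 G) (u : V) :
    ∃ φ : G ≃g P4, φ u = 0 ∨ φ u = 1 := by
  obtain ⟨V₁, V₂, h₁, h₂, G₁, G₂, a, b, e, he, b₁, b₂⟩ := h
  obtain ⟨φ₁, hφ₁⟩ := @classify1 V₁ h₁ G₁ b₁ a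
  obtain ⟨φ₂, hφ₂⟩ := @classify1 V₂ h₂ G₂ b₂ b
  let φ : G ≃g P4 :=
    ((isoOfSpec e he).trans (joinIso' φ₁ φ₂ hφ₁ hφ₂)).trans joinTopIsoP4
  have h4 : ∀ z : Fin 4, z = 0 ∨ z = 1 ∨ z = 2 ∨ z = 3 := by decide
  rcases h4 (φ u) with hz | hz | hz | hz
  · exact ⟨φ, Or.inl hz⟩
  · exact ⟨φ, Or.inr hz⟩
  · refine ⟨φ.trans rev4, Or.inr ?_⟩
    show rev4 (φ u) = 1
    rw [hz]; rfl
  · refine ⟨φ.trans rev4, Or.inl ?_⟩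
    show rev4 (φ u) = 0
    rw [hz]; rfl

end ClassifyTwo
section ClassifyThree

open SimpleGraph

def ε8 : (Fin 4 ⊕ Fin 4) ≃ Fin 8 := finSumFinEquiv

def T1 : SimpleGraph (Fin 8) := relabel (joinGraph P4 P4 0 0) ε8
def T2 : SimpleGraph (Fin 8) := relabel (joinGraph P4 P4 0 1) ε8
def T3 : SimpleGraph (Fin 8) := relabel (joinGraph P4 P4 1 1) ε8

instance : DecidableRel T1.Adj :=
  inferInstanceAs (DecidableRel (relabel (joinGraph P4 P4 0 0) ε8).Adj)
instance : DecidableRel T2.Adj :=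
  inferInstanceAs (DecidableRel (relabel (joinGraph P4 P4 0 1) ε8).Adj)
instance : DecidableRel T3.Adj :=
  inferInstanceAs (DecidableRel (relabel (joinGraph P4 P4 1 1) ε8).Adj)

theorem T1_bisectable : IsBisectable 3 T1 :=
  isBisectable_congr (relabelIso _ ε8) (isBisectable_join 0 0 P4_bisectable P4_bisectable)
theorem T2_bisectable : IsBisectable 3 T2 :=
  isBisectable_congr (relabelIso _ ε8) (isBisectable_join 0 1 P4_bisectable P4_bisectable)
theorem T3_bisectable : IsBisectable 3 T3 :=
  isBisectable_congr (relabelIso _ ε8) (isBisectable_join 1 1 P4_bisectable P4_bisectable)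

theorem iso_degree {V W : Type} [Fintype V] [Fintype W] {G : SimpleGraph V}
    {H : SimpleGraph W} [DecidableRel G.Adj] [DecidableRel H.Adj] (φ : G ≃g H) (v : V) :
    G.degree v = H.degree (φ v) := by
  rw [← SimpleGraph.card_neighborSet_eq_degree, ← SimpleGraph.card_neighborSet_eq_degree]
  exact Fintype.card_congr (φ.mapNeighborSet v)

theorem T1_deg : ∀ v : Fin 8, T1.degree v ≤ 2 := by decide
theorem T2_deg3 : T2.degree 5 = 3 := by decide
theorem T2_deg_unique : ∀ v w : Fin 8, T2.degree v = 3 → T2.degree w = 3 → v = w := by decide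
theorem T3_deg3 : T3.degree 1 = 3 ∧ T3.degree 5 = 3 := by decide

theorem T1_not_T2 : IsEmpty (T1 ≃g T2) := by
  constructor; intro φ
  have := iso_degree φ.symm (5 : Fin 8)
  rw [T2_deg3] at this
  exact absurd this.symm (by have := T1_deg (φ.symm 5); omega)

theorem T1_not_T3 : IsEmpty (T1 ≃g T3) := by
  constructor; intro φ
  have := iso_degree φ.symm (1 : Fin 8)
  rw [T3_deg3.1] at this
  exact absurd this.symm (by have := T1_deg (φ.symm 1); omega)

theorem T2_not_T3 : IsEmpty (T2 ≃g T3) := by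
  constructor; intro φ
  have h1 := iso_degree φ.symm (1 : Fin 8)
  have h5 := iso_degree φ.symm (5 : Fin 8)
  rw [T3_deg3.1] at h1
  rw [T3_deg3.2] at h5
  have := T2_deg_unique _ _ h1.symm h5.symm
  have : (1 : Fin 8) = 5 := φ.symm.injective this
  exact absurd this (by decide)

theorem classify3 {V : Type} [Fintype V] {G : SimpleGraph V} (h : IsBisectable 3 G) :
    Nonempty (G ≃g T1) ∨ Nonempty (G ≃g T2) ∨ Nonempty (G ≃g T3) := by
  obtain ⟨V₁, V₂, h₁, h₂, G₁, G₂, a, b, e, he, b₁, b₂⟩ := h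
  obtain ⟨φ₁, hφ₁⟩ := @classify2 V₁ h₁ G₁ b₁ a
  obtain ⟨φ₂, hφ₂⟩ := @classify2 V₂ h₂ G₂ b₂ b
  have base : G ≃g joinGraph G₁ G₂ a b := isoOfSpec e he
  rcases hφ₁ with h1 | h1 <;> rcases hφ₂ with h2 | h2
  · exact Or.inl ⟨(base.trans (joinIso' φ₁ φ₂ h1 h2)).trans (relabelIso _ ε8)⟩
  · exact Or.inr (Or.inl ⟨(base.trans (joinIso' φ₁ φ₂ h1 h2)).trans (relabelIso _ ε8)⟩)
  · exact Or.inr (Or.inl ⟨((base.trans (joinIso' φ₁ φ₂ h1 h2)).trans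
      (joinComm P4 P4 1 0)).trans (relabelIso _ ε8)⟩)
  · exact Or.inr (Or.inr ⟨(base.trans (joinIso' φ₁ φ₂ h1 h2)).trans (relabelIso _ ε8)⟩)

end ClassifyThree

theorem nonempty_of_bisectable {i : ℕ} {V : Type} [Fintype V] {G : SimpleGraph V}
    (h : IsBisectable i G) : Nonempty V := by
  induction i generalizing V with
  | zero =>
    have : Fintype.card V = 1 := h
    exact Fintype.card_pos_iff.mp (by omega)
  | succ i ih =>
    obtain ⟨V₁, V₂, h₁, h₂, G₁, G₂, u, v, e, he, b₁, b₂⟩ := h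
    exact ⟨e.symm (Sum.inl u)⟩

/-- Up to isomorphism of free (unrooted, unlabeled) trees, there is exactly one
`1`-bisectable tree, exactly one `2`-bisectable tree, and exactly three
`3`-bisectable trees. -/
theorem bisectable_counts_small :
    (∃ H : SimpleGraph (Fin 2), IsBisectable 1 H ∧
      ∀ (V : Type) [Fintype V] (G : SimpleGraph V), IsBisectable 1 G → Nonempty (G ≃g H)) ∧
    (∃ H : SimpleGraph (Fin 4), IsBisectable 2 H ∧
      ∀ (V : Type) [Fintype V] (G : SimpleGraph V), IsBisectable 2 G → Nonempty (G ≃g H)) ∧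
    (∃ H₁ H₂ H₃ : SimpleGraph (Fin 8),
      IsBisectable 3 H₁ ∧ IsBisectable 3 H₂ ∧ IsBisectable 3 H₃ ∧
      IsEmpty (H₁ ≃g H₂) ∧ IsEmpty (H₁ ≃g H₃) ∧ IsEmpty (H₂ ≃g H₃) ∧
      ∀ (V : Type) [Fintype V] (G : SimpleGraph V), IsBisectable 3 G →
        (Nonempty (G ≃g H₁) ∨ Nonempty (G ≃g H₂) ∨ Nonempty (G ≃g H₃))) := by
  refine ⟨⟨⊤, top2_bisectable, ?_⟩, ⟨P4, P4_bisectable, ?_⟩,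
    ⟨T1, T2, T3, T1_bisectable, T2_bisectable, T3_bisectable,
      T1_not_T2, T1_not_T3, T2_not_T3, ?_⟩⟩
  · intro V _ G h
    have : Nonempty V := nonempty_of_bisectable h
    obtain ⟨φ, -⟩ := classify1 h (Classical.arbitrary V)
    exact ⟨φ⟩
  · intro V _ G h
    have : Nonempty V := nonempty_of_bisectable h
    obtain ⟨φ, -⟩ := classify2 h (Classical.arbitrary V)
    exact ⟨φ⟩
  · intro V _ G h
    exact classify3 h
end

section
/- For any finite decreasing sequence of positive reals w_0 ≥ w_1 ≥ ... ≥ w_{n-1} with sum W, we have Σ_i w_i (1/2 + ⌊log₂(i+1)⌋) ≥ Σ_i (1/2) w_i log₂(W / w_i). -/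
open Finset Real

/-- Exact formula for the partial sums of `q i = 2^{-(1+2⌊log₂(i+1)⌋)}`. -/
lemma qsum_formula (n : ℕ) :
    ∑ i ∈ Finset.range n, (1 : ℝ) / (2 * 4 ^ Nat.log 2 (i + 1)) =
      1 - 1 / 2 ^ Nat.log 2 (n + 1) +
        (((n : ℝ) + 1) - 2 ^ Nat.log 2 (n + 1)) / (2 * 4 ^ Nat.log 2 (n + 1)) := by
  induction n with
  | zero => simp
  | succ n ih =>
    rw [Finset.sum_range_succ, ih]
    set K := Nat.log 2 (n + 1) with hK
    have hle : 2 ^ K ≤ n + 1 := Nat.pow_log_le_self 2 (Nat.succ_ne_zero n)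
    have hlt : n + 1 < 2 ^ (K + 1) := Nat.lt_pow_succ_log_self (by norm_num) (n + 1)
    by_cases hcase : n + 2 = 2 ^ (K + 1)
    · have hK2 : Nat.log 2 (n + 2) = K + 1 := by rw [hcase, Nat.log_pow (by norm_num)]
      have hn1 : ((n : ℝ) + 2) = 2 * 2 ^ K := by
        have h : ((n + 2 : ℕ) : ℝ) = ((2 ^ (K + 1) : ℕ) : ℝ) := by exact_mod_cast hcase
        push_cast at h
        rw [pow_succ] at h
        linarith
      have hn' : (n : ℝ) = 2 * 2 ^ K - 2 := by linarith
      rw [hK2]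
      have h2K : (0:ℝ) < 2 ^ K := by positivity
      have h4K : (0:ℝ) < 4 ^ K := by positivity
      have h44 : (4:ℝ) ^ K = 2 ^ K * 2 ^ K := by
        rw [show (4:ℝ) = 2 * 2 by norm_num, mul_pow]
      push_cast
      rw [hn', pow_succ, pow_succ, h44]
      field_simp
      ring
    · have hK2 : Nat.log 2 (n + 2) = K := by
        refine Nat.log_eq_of_pow_le_of_lt_pow (le_trans hle (by omega)) ?_
        omega
      rw [hK2]
      push_cast
      ring
  
/-- The sum of `q i` is at most 1. -/
lemma qsum_le_one (n : ℕ) :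
    ∑ i ∈ Finset.range n, (1 : ℝ) / (2 * 4 ^ Nat.log 2 (i + 1)) ≤ 1 := by
  rw [qsum_formula]
  set K := Nat.log 2 (n + 1) with hK
  have hlt : n + 1 < 2 ^ (K + 1) := Nat.lt_pow_succ_log_self (by norm_num) (n + 1)
  have hltR : ((n : ℝ) + 1) ≤ 2 * 2 ^ K := by
    have : ((n : ℝ) + 1) < ((2 ^ (K + 1) : ℕ) : ℝ) := by exact_mod_cast hlt
    push_cast at this
    rw [pow_succ] at this
    linarith
  have h2K : (0:ℝ) < 2 ^ K := by positivity
  have h4K : (0:ℝ) < 4 ^ K := by positivity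
  have h44 : (4:ℝ) ^ K = 2 ^ K * 2 ^ K := by
    rw [show (4:ℝ) = 2 * 2 by norm_num, mul_pow]
  have hX : ((n : ℝ) + 1 - 2 ^ K) / (2 * 4 ^ K) ≤ 1 / 2 ^ K := by
    rw [div_le_div_iff₀ (by positivity) (by positivity), h44]
    nlinarith
  linarith

/-- For any finite nonincreasing sequence of positive reals `w₀ ≥ w₁ ≥ ...` with sum `W`,
`Σ_i w_i (1/2 + ⌊log₂(i+1)⌋) ≥ Σ_i (1/2) w_i log₂(W / w_i)`. -/
theorem sum_floor_log_rank_ge_half_entropy (n : ℕ) (w : Fin n → ℝ)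
    (hpos : ∀ i, 0 < w i) (hmono : ∀ i j : Fin n, i ≤ j → w j ≤ w i) :
    ∑ i : Fin n, w i * (1 / 2 + (⌊Real.logb 2 (((i : ℕ) : ℝ) + 1)⌋ : ℝ)) ≥
      ∑ i : Fin n, (1 / 2) * w i * Real.logb 2 ((∑ j : Fin n, w j) / w i) := by
  rcases Nat.eq_zero_or_pos n with hn | hn
  · subst hn; simp
  set W := ∑ j : Fin n, w j with hW
  have hWpos : 0 < W := Finset.sum_pos (fun i _ => hpos i) (by
    simp [Finset.univ_nonempty_iff, ← Fin.pos_iff_nonempty, hn])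
  have hlog2 : (0:ℝ) < Real.log 2 := Real.log_pos (by norm_num)
  -- define q i
  set q : Fin n → ℝ := fun i => (1 : ℝ) / (2 * 4 ^ Nat.log 2 ((i : ℕ) + 1)) with hq
  have hqpos : ∀ i, 0 < q i := fun i => by positivity
  -- floor of logb is Nat.log
  have hfloor : ∀ i : Fin n, (⌊Real.logb 2 (((i : ℕ) : ℝ) + 1)⌋ : ℝ) =
      (Nat.log 2 ((i : ℕ) + 1) : ℝ) := by
    intro i
    have : (((i : ℕ) : ℝ) + 1) = (((i : ℕ) + 1 : ℕ) : ℝ) := by push_cast; ring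
    rw [this, show (2:ℝ) = ((2:ℕ):ℝ) by norm_num,
      Real.floor_logb_natCast (by positivity), Int.log_natCast]
    norm_num
  -- key identity : w i * (1/2 + ⌊logb⌋) = 1/2 w i logb (W / w i) + (w i * log (w i / (W * q i))) / (2 * log 2)
  have hterm : ∀ i : Fin n,
      w i * (1 / 2 + (⌊Real.logb 2 (((i : ℕ) : ℝ) + 1)⌋ : ℝ)) =
        (1 / 2) * w i * Real.logb 2 (W / w i)
          + (w i * Real.log (w i / (W * q i))) / (2 * Real.log 2) := by
    intro i
    rw [hfloor i]
    set k := Nat.log 2 ((i : ℕ) + 1) with hk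
    have hwi := hpos i
    have hqi := hqpos i
    have hlogq : Real.log (w i / (W * q i)) =
        Real.log (w i) - Real.log W + Real.log 2 + (k : ℝ) * Real.log 4 := by
      rw [Real.log_div (ne_of_gt hwi) (by positivity),
          Real.log_mul (ne_of_gt hWpos) (ne_of_gt hqi), hq]
      simp only [← hk]
      simp only [one_div, Real.log_inv, Real.log_mul (two_ne_zero) (by positivity : ((4:ℝ)^k) ≠ 0),
        Real.log_pow]
      ring
    have hlog4 : Real.log 4 = 2 * Real.log 2 := by
      rw [show (4:ℝ) = 2 ^ 2 by norm_num, Real.log_pow]; push_cast; ring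
    rw [Real.logb, Real.log_div (ne_of_gt hWpos) (ne_of_gt hwi), hlogq, hlog4]
    field_simp
    ring
  rw [ge_iff_le, Finset.sum_congr rfl (fun i _ => hterm i), Finset.sum_add_distrib]
  have hsum : 0 ≤ ∑ i : Fin n, (w i * Real.log (w i / (W * q i))) / (2 * Real.log 2) := by
    rw [← Finset.sum_div]
    apply div_nonneg _ (by positivity)
    have key : ∑ i : Fin n, w i * Real.log (W * q i / w i) ≤ 0 := by
      have h1 : ∀ i : Fin n, w i * Real.log (W * q i / w i) ≤ W * q i - w i := by
        intro i
        have hx : 0 < W * q i / w i := div_pos (mul_pos hWpos (hqpos i)) (hpos i)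
        have := Real.log_le_sub_one_of_pos hx
        have h2 := mul_le_mul_of_nonneg_left this (le_of_lt (hpos i))
        calc w i * Real.log (W * q i / w i) ≤ w i * (W * q i / w i - 1) := h2
          _ = W * q i - w i := by
              rw [mul_comm, sub_mul, div_mul_cancel₀ _ (ne_of_gt (hpos i)), one_mul]
      calc ∑ i : Fin n, w i * Real.log (W * q i / w i) ≤ ∑ i : Fin n, (W * q i - w i) :=
            Finset.sum_le_sum (fun i _ => h1 i)
        _ = W * (∑ i : Fin n, q i) - W := by rw [Finset.sum_sub_distrib, ← Finset.mul_sum, hW]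
        _ ≤ W * 1 - W := by
            have hq1 : ∑ i : Fin n, q i ≤ 1 := by
              rw [hq, Fin.sum_univ_eq_sum_range (fun i => (1:ℝ) / (2 * 4 ^ Nat.log 2 (i + 1)))]
              exact qsum_le_one n
            nlinarith
        _ = 0 := by ring
    have : ∀ i : Fin n, w i * Real.log (w i / (W * q i)) = - (w i * Real.log (W * q i / w i)) := by
      intro i
      have hl : Real.log (w i / (W * q i)) = - Real.log (W * q i / w i) := by
        rw [← Real.log_inv, inv_div]
      rw [hl]; ring
    rw [Finset.sum_congr rfl (fun i _ => this i), Finset.sum_neg_distrib]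
    linarith
  linarith
end

section
/- For any finite nonincreasing sequence of positive reals w_0 ≥ w_1 ≥ ... ≥ w_{n-1} with sum W, we have Σ_i w_i ⌊log₂(i+1)⌋ ≤ Σ_i w_i log₂(W / w_i). -/
open Finset Real

theorem Fin.succ_nsmul_le_sum_of_antitone {M : Type*} [AddCommMonoid M] [PartialOrder M]
    [IsOrderedAddMonoid M] {n : ℕ} {w : Fin n → M} (hnonneg : ∀ j, 0 ≤ w j)
    (hanti : Antitone w) (i : Fin n) : ((i : ℕ) + 1) • w i ≤ ∑ j, w j :=
  calc ((i : ℕ) + 1) • w i = ∑ _j ∈ Iic i, w i := by rw [Finset.sum_const, Fin.card_Iic]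
    _ ≤ ∑ j ∈ Iic i, w j := sum_le_sum fun j hj => hanti (mem_Iic.mp hj)
    _ ≤ ∑ j, w j := sum_le_sum_of_subset_of_nonneg (subset_univ _) fun j _ _ => hnonneg j

/-- For any finite nonincreasing sequence of positive reals `w₀ ≥ w₁ ≥ ...` with sum `W`,
`Σ_i w_i ⌊log₂(i+1)⌋ ≤ Σ_i w_i log₂(W / w_i)`. -/
theorem sum_floor_log_rank_le_entropy (n : ℕ) (w : Fin n → ℝ)
    (hpos : ∀ i, 0 < w i) (hmono : ∀ i j : Fin n, i ≤ j → w j ≤ w i) :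
    ∑ i : Fin n, w i * (⌊Real.logb 2 (((i : ℕ) : ℝ) + 1)⌋ : ℝ) ≤
      ∑ i : Fin n, w i * Real.logb 2 ((∑ j : Fin n, w j) / w i) := by
  refine sum_le_sum fun i _ => mul_le_mul_of_nonneg_left ?_ (hpos i).le
  have hrank : ((i : ℕ) : ℝ) + 1 ≤ (∑ j, w j) / w i := by
    rw [le_div_iff₀ (hpos i)]
    simpa [nsmul_eq_mul] using
      Fin.succ_nsmul_le_sum_of_antitone (fun j => (hpos j).le) (fun a b h => hmono a b h) i
  exact (Int.floor_le _).trans (logb_le_logb_of_le one_lt_two (by positivity) hrank)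
end

section
/- Shannon's entropy lower bound on prefix codes: for any binary tree with n leaves labeled 0,...,n-1 and any probability distribution (p_0,...,p_{n-1}) on the leaves, the expected depth Σ_i p_i · depth(leaf i) is at least the entropy Σ_i p_i log₂(1/p_i). -/
/-- Finite binary trees: a binary code is such a tree, its leaves being the symbols. -/
inductive BinTree : Type
  | leaf : BinTree
  | node : BinTree → BinTree → BinTree

/-- The list of depths of the leaves of a binary tree, in left-to-right order;
the leaves of the tree are thereby labeled `0, ..., n-1`. -/
def BinTree.depths : BinTree → List ℕ
  | .leaf => [0]
  | .node l r => (l.depths ++ r.depths).map (· + 1)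

/-- Kraft's equality for full binary trees: the sum of `2^{-depth}` over leaves is `1`. -/
lemma BinTree.kraft (t : BinTree) : (t.depths.map (fun d => (2:ℝ)⁻¹ ^ d)).sum = 1 := by
  induction t with
  | leaf => simp [BinTree.depths]
  | node l r hl hr =>
    have e : ∀ L : List ℕ, ((L.map (· + 1)).map (fun d => (2:ℝ)⁻¹ ^ d)).sum
        = 2⁻¹ * (L.map (fun d => (2:ℝ)⁻¹ ^ d)).sum := by
      intro L
      induction L with
      | nil => simp
      | cons a L ih =>
        simp only [List.map_cons, List.sum_cons, ih, pow_succ]; ring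
    simp only [BinTree.depths, List.map_append, List.sum_append, e]
    rw [hl, hr]; norm_num

/-- Per-symbol bound coming from `log x ≤ x - 1`. -/
lemma term_bound (p : ℝ) (hp : 0 ≤ p) (d : ℕ) :
    p * d - p * Real.logb 2 (1 / p) ≥ (p - (2:ℝ)⁻¹ ^ d) / Real.log 2 := by
  have hlog2 : (0:ℝ) < Real.log 2 := Real.log_pos (by norm_num)
  have hq : (0:ℝ) < (2:ℝ)⁻¹ ^ d := by positivity
  rcases hp.eq_or_lt with h | h
  · rw [← h]
    have : (0 - (2:ℝ)⁻¹ ^ d) / Real.log 2 ≤ 0 := by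
      apply div_nonpos_of_nonpos_of_nonneg <;> linarith
    simpa using this
  · have hlq : Real.log ((2:ℝ)⁻¹ ^ d / p) ≤ (2:ℝ)⁻¹ ^ d / p - 1 :=
      Real.log_le_sub_one_of_pos (by positivity)
    have hsplit : Real.log ((2:ℝ)⁻¹ ^ d / p) = -(d * Real.log 2) - Real.log p := by
      rw [Real.log_div (ne_of_gt hq) (ne_of_gt h), Real.log_pow, Real.log_inv]
      ring
    have hlogb : Real.logb 2 (1 / p) = -(Real.log p / Real.log 2) := by
      rw [Real.logb, Real.log_div one_ne_zero (ne_of_gt h), Real.log_one]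
      ring
    rw [hlogb, ge_iff_le, div_le_iff₀ hlog2]
    have key : p * Real.log ((2:ℝ)⁻¹ ^ d / p) ≤ (2:ℝ)⁻¹ ^ d - p := by
      have := mul_le_mul_of_nonneg_left hlq (le_of_lt h)
      calc p * Real.log ((2:ℝ)⁻¹ ^ d / p) ≤ p * ((2:ℝ)⁻¹ ^ d / p - 1) := this
        _ = (2:ℝ)⁻¹ ^ d - p := by field_simp
    rw [hsplit] at key
    have hf : p * (Real.log p / Real.log 2) * Real.log 2 = p * Real.log p := by
      field_simp
    nlinarith [key]

/-- Shannon's entropy lower bound on prefix codes: for any binary tree with `n` leaves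
labeled `0, ..., n-1` and any probability distribution `(p_0, ..., p_{n-1})` on the
leaves, the expected depth `Σ_i p_i · depth(leaf i)` is at least the entropy
`Σ_i p_i log₂(1 / p_i)`. -/
theorem expected_depth_ge_entropy (t : BinTree) (p : Fin t.depths.length → ℝ)
    (hp : ∀ i, 0 ≤ p i) (hsum : ∑ i, p i = 1) :
    ∑ i, p i * (t.depths.get i : ℝ) ≥ ∑ i, p i * Real.logb 2 (1 / p i) := by
  have hlog2 : (0:ℝ) < Real.log 2 := Real.log_pos (by norm_num)
  have hq : ∑ i : Fin t.depths.length, (2:ℝ)⁻¹ ^ (t.depths.get i) = 1 := by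
    simp only [List.get_eq_getElem]
    rw [Fin.sum_univ_fun_getElem t.depths (fun d => (2:ℝ)⁻¹ ^ d)]
    exact t.kraft
  have hb : ∑ i, (p i - (2:ℝ)⁻¹ ^ (t.depths.get i)) / Real.log 2 = 0 := by
    rw [← Finset.sum_div, Finset.sum_sub_distrib, hsum, hq]; simp
  have hle := Finset.sum_le_sum
    (fun i (_ : i ∈ Finset.univ) => term_bound (p i) (hp i) (t.depths.get i))
  rw [Finset.sum_sub_distrib] at hle
  rw [hb] at hle
  linarith
end

section
/- For every i ≥ 0 there exists a binary tree with n = 2^i leaves in which the leaf indexed i (for i = 0,...,n-1, ordered appropriately) has depth at most 1 + 2⌊log₂(i+1)⌋; consequently for any probability distribution w_0 ≥ w_1 ≥ ... on the leaves (assigned in decreasing order of probability), the expected depth is at most 1 + Σ_i 2 w_i ⌊log₂(i+1)⌋. -/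
namespace BinTree

def complete : ℕ → BinTree
  | 0 => leaf
  | n + 1 => node (complete n) (complete n)

theorem depths_complete (n : ℕ) : (complete n).depths = List.replicate (2 ^ n) n := by
  induction n with
  | zero => rfl
  | succ n ih =>
    simp only [complete, depths, ih, ← List.replicate_add, List.map_replicate]
    ring_nf

def spine : ℕ → ℕ → BinTree
  | 0, _ => leaf
  | m + 1, j => node (complete j) (spine m (j + 1))

theorem depths_spine_succ (m j : ℕ) :
    (spine (m + 1) j).depths =
      List.replicate (2 ^ j) (j + 1) ++ (spine m (j + 1)).depths.map (· + 1) := by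
  simp [spine, depths, depths_complete, List.map_replicate]

theorem length_depths_spine_add (m j : ℕ) :
    (spine m j).depths.length + 2 ^ j = 2 ^ (j + m) + 1 := by
  induction m generalizing j with
  | zero => simp [spine, depths, add_comm]
  | succ m ih =>
    have h := ih (j + 1)
    rw [add_right_comm, pow_succ] at h
    rw [depths_spine_succ, List.length_append, List.length_replicate, List.length_map,
      ← add_assoc]
    omega

theorem length_depths_spine_zero (k : ℕ) : (spine k 0).depths.length = 2 ^ k := by
  simpa using length_depths_spine_add k 0

/-- Shifting the leaf index by `2 ^ j` makes the bound invariant along the spine: the leaf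
`i` of `spine m j` is the leaf `i + 2 ^ j - 1` of the whole tree `spine (j + m) 0`. -/
theorem depths_spine_getElem_add_le (m j i : ℕ) (hi : i < (spine m j).depths.length) :
    (spine m j).depths[i] + j ≤ 2 * Nat.log 2 (i + 2 ^ j) + 1 := by
  induction m generalizing j i with
  | zero =>
    obtain rfl : i = 0 := by simpa [spine, depths] using hi
    simp [spine, depths, Nat.log_pow]
    omega
  | succ m ih =>
    simp only [List.getElem_of_eq (depths_spine_succ m j), List.getElem_append,
      List.length_replicate, List.getElem_replicate, List.getElem_map]
    split_ifs with hblock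
    · have : j ≤ Nat.log 2 (i + 2 ^ j) :=
        Nat.le_log_of_pow_le one_lt_two (Nat.le_add_left _ _)
      omega
    · have hrest : i - 2 ^ j < (spine m (j + 1)).depths.length := by
        rw [depths_spine_succ, List.length_append, List.length_replicate,
          List.length_map] at hi
        omega
      have h := ih (j + 1) (i - 2 ^ j) hrest
      rw [pow_succ, show i - 2 ^ j + 2 ^ j * 2 = i + 2 ^ j by omega] at h
      omega

theorem depths_spine_zero_getElem_le (k i : ℕ) (hi : i < (spine k 0).depths.length) :
    (spine k 0).depths[i] ≤ 2 * Nat.log 2 (i + 1) + 1 := by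
  simpa using depths_spine_getElem_add_le k 0 i hi

end BinTree

theorem Real.floor_logb_two_natCast_add_one (i : ℕ) :
    (⌊Real.logb 2 ((i : ℝ) + 1)⌋ : ℝ) = Nat.log 2 (i + 1) := by
  have h := Real.floor_logb_natCast (b := 2) (r := ((i + 1 : ℕ) : ℝ)) (by positivity)
  rw [Int.log_natCast] at h
  exact_mod_cast h

/-- For every `k` there exists a binary tree with `n = 2^k` leaves in which the leaf
indexed `i` has depth at most `1 + 2⌊log₂(i+1)⌋`; consequently, for any probability
distribution `w₀ ≥ w₁ ≥ ...` on the leaves (assigned in nonincreasing order of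
probability), the expected depth is at most `1 + Σ_i 2 w_i ⌊log₂(i+1)⌋`. -/
theorem exists_code_by_rank (k : ℕ) :
    ∃ t : BinTree, t.depths.length = 2 ^ k ∧
      (∀ i : Fin t.depths.length,
        (t.depths.get i : ℝ) ≤ 1 + 2 * (⌊Real.logb 2 (((i : ℕ) : ℝ) + 1)⌋ : ℝ)) ∧
      ∀ w : Fin t.depths.length → ℝ, (∀ i, 0 ≤ w i) →
        (∀ i j, i ≤ j → w j ≤ w i) → ∑ i, w i = 1 →
        ∑ i, w i * (t.depths.get i : ℝ) ≤
          1 + ∑ i, 2 * w i * (⌊Real.logb 2 (((i : ℕ) : ℝ) + 1)⌋ : ℝ) := by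
  have hdepth : ∀ i : Fin (BinTree.spine k 0).depths.length,
      ((BinTree.spine k 0).depths.get i : ℝ) ≤
        1 + 2 * (⌊Real.logb 2 (((i : ℕ) : ℝ) + 1)⌋ : ℝ) := by
    intro i
    rw [Real.floor_logb_two_natCast_add_one]
    have h := BinTree.depths_spine_zero_getElem_le k i i.isLt
    simp only [List.get_eq_getElem]
    exact_mod_cast h.trans_eq (add_comm _ _)
  refine ⟨BinTree.spine k 0, BinTree.length_depths_spine_zero k, hdepth, ?_⟩
  intro w hw _ hsum
  calc ∑ i, w i * ((BinTree.spine k 0).depths.get i : ℝ)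
      ≤ ∑ i, (w i + 2 * w i * (⌊Real.logb 2 (((i : ℕ) : ℝ) + 1)⌋ : ℝ)) :=
        Finset.sum_le_sum fun i _ => by nlinarith [mul_le_mul_of_nonneg_left (hdepth i) (hw i)]
    _ = 1 + ∑ i, 2 * w i * (⌊Real.logb 2 (((i : ℕ) : ℝ) + 1)⌋ : ℝ) := by
        rw [Finset.sum_add_distrib, hsum]
end

section
/- Consider n points whose minimum spanning tree has edge weights w_0 ≥ w_1 ≥ ... ≥ w_{n-2} with sum W. Then Σ_{i≥0} F_i ≥ Σ_j (1/2) w_j (1 + log₂(W/w_j)), where F_i denotes the total length of the minimum-weight spanning forest with 2^i trees, i.e., F_i = Σ_{j ≥ 2^i - 1} w_j, and the outer sum ranges over all i ≥ 0 with 2^i - 1 ≤ n - 2. -/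
open Finset

private lemma qsum_aux : ∀ n : ℕ, 1 ≤ n →
    ∑ j ∈ range n, ((2:ℝ)^(2*Nat.log 2 (j+1)+1))⁻¹ ≤
      1 - ((2:ℝ)^(Nat.log 2 n))⁻¹
        + ((n:ℝ) + 1 - (2:ℝ)^(Nat.log 2 n)) * ((2:ℝ)^(2*Nat.log 2 n + 1))⁻¹ := by
  intro n hn
  induction n, hn using Nat.le_induction with
  | base => norm_num
  | succ n hn ih =>
    rw [Finset.sum_range_succ]
    set k := Nat.log 2 n with hk
    set k' := Nat.log 2 (n+1) with hk'
    have hkk' : k ≤ k' := Nat.log_mono_right (by omega)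
    have h1 : 2^k' ≤ n + 1 := Nat.pow_log_le_self 2 (by omega)
    have h2 : n < 2^(k+1) := Nat.lt_pow_succ_log_self (by norm_num) n
    have h3 : k' ≤ k + 1 :=
      (Nat.pow_le_pow_iff_right (by norm_num : 1 < 2)).mp
        (le_trans h1 (by omega : n + 1 ≤ 2^(k+1)))
    have e2 : (2:ℝ)^(2*k+1) = 2*((2:ℝ)^k)^2 := by
      rw [show 2*k+1 = k+(k+1) by omega, pow_add, pow_add]; ring
    rcases (by omega : k' = k ∨ k' = k + 1) with h | h
    · rw [h]
      have : ((n:ℝ)+1) + 1 - (2:ℝ)^k = ((n:ℝ) + 1 - (2:ℝ)^k) + 1 := by ring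
      push_cast
      rw [this]
      linarith [ih]
    · -- then n + 1 = 2^(k+1)
      have hn1 : n + 1 = 2^(k+1) := by
        have : 2^(k+1) ≤ n + 1 := by rw [← h]; exact h1
        omega
      rw [h]
      have hcast : (n:ℝ) = 2 * (2:ℝ)^k - 1 := by
        have h5 : ((n+1:ℕ):ℝ) = ((2^(k+1):ℕ):ℝ) := by rw [hn1]
        push_cast [pow_succ] at h5
        linarith
      have hx : (0:ℝ) < (2:ℝ)^k := by positivity
      have e1 : (2:ℝ)^(2*(k+1)+1) = 8 * ((2:ℝ)^k)^2 := by
        rw [show 2*(k+1)+1 = k+(k+3) by omega, pow_add, pow_add]; ring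
      have e3 : (2:ℝ)^(k+1) = 2 * (2:ℝ)^k := by rw [pow_succ]; ring
      have E1 : 1 - ((2:ℝ)^k)⁻¹ + ((n:ℝ)+1-(2:ℝ)^k)*((2:ℝ)^(2*k+1))⁻¹
          = 1 - (2*(2:ℝ)^k)⁻¹ := by
        rw [hcast, e2]; field_simp; ring
      have E2 : 1 - ((2:ℝ)^(k+1))⁻¹
          + (((n:ℝ)+1)+1-(2:ℝ)^(k+1))*((2:ℝ)^(2*(k+1)+1))⁻¹
          = 1 - (2*(2:ℝ)^k)⁻¹ + ((2:ℝ)^(2*(k+1)+1))⁻¹ := by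
        rw [hcast, e1, e3]; field_simp; ring
      push_cast
      push_cast at E2
      rw [E2]
      linarith [ih, E1]

private lemma qsum (n : ℕ) : ∑ j ∈ range n, ((2:ℝ)^(2*Nat.log 2 (j+1)+1))⁻¹ ≤ 1 := by
  rcases Nat.eq_zero_or_pos n with rfl | hn
  · simp
  refine le_trans (qsum_aux n hn) ?_
  set k := Nat.log 2 n with hk
  have h2 : n < 2^(k+1) := Nat.lt_pow_succ_log_self (by norm_num) n
  have hx : (0:ℝ) < (2:ℝ)^k := by positivity
  have e2 : (2:ℝ)^(2*k+1) = 2*((2:ℝ)^k)^2 := by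
    rw [show 2*k+1 = k+(k+1) by omega, pow_add, pow_add]; ring
  have hcast : (n:ℝ) + 1 ≤ 2 * (2:ℝ)^k := by
    have : ((n:ℕ):ℝ) + 1 ≤ ((2^(k+1):ℕ):ℝ) := by exact_mod_cast h2
    push_cast [pow_succ] at this
    linarith
  rw [e2]
  have hterm : ((n:ℝ) + 1 - (2:ℝ)^k) * (2*((2:ℝ)^k)^2)⁻¹ ≤
      ((2:ℝ)^k) * (2*((2:ℝ)^k)^2)⁻¹ := by
    apply mul_le_mul_of_nonneg_right (by linarith) (by positivity)
  have : ((2:ℝ)^k) * (2*((2:ℝ)^k)^2)⁻¹ = (2*(2:ℝ)^k)⁻¹ := by field_simp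
  rw [this] at hterm
  have h4 : (2*(2:ℝ)^k)⁻¹ ≤ ((2:ℝ)^k)⁻¹ := by
    apply inv_anti₀ hx; linarith
  linarith

private lemma count_lemma (m : ℕ) (j : Fin m) :
    ((Finset.range (m+1)).filter (fun i => 2^i ≤ m)).filter
        (fun i => 2^i - 1 ≤ (j:ℕ)) = Finset.range (Nat.log 2 ((j:ℕ)+1) + 1) := by
  have hj : (j:ℕ) < m := j.isLt
  ext i
  simp only [Finset.mem_filter, Finset.mem_range]
  constructor
  · rintro ⟨⟨-, -⟩, h⟩
    have h1 : 1 ≤ 2^i := Nat.one_le_two_pow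
    have h2 : 2^i ≤ (j:ℕ)+1 := by omega
    exact Nat.lt_succ_of_le ((Nat.le_log_iff_pow_le (by norm_num) (by omega)).mpr h2)
  · intro hi
    have hle : i ≤ Nat.log 2 ((j:ℕ)+1) := by omega
    have h2 : 2^i ≤ (j:ℕ)+1 := (Nat.le_log_iff_pow_le (by norm_num) (by omega)).mp hle
    have hlog : Nat.log 2 ((j:ℕ)+1) < (j:ℕ)+1 := Nat.log_lt_self 2 (by omega)
    exact ⟨⟨by omega, by omega⟩, by omega⟩

/-- Consider `n` points whose minimum spanning tree has edge weights
`w₀ ≥ w₁ ≥ ... ≥ w_{m-1}` (with `m = n - 1`) and sum `W`.  Writing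
`F_i = Σ_{j ≥ 2^i - 1} w_j` for the total length of the minimum-weight spanning forest
with `2^i` trees, we have `Σ_{i ≥ 0, 2^i - 1 ≤ m - 1} F_i ≥ Σ_j (1/2) w_j (1 + log₂(W / w_j))`. -/
theorem sum_forests_ge_half_entropy (m : ℕ) (w : Fin m → ℝ)
    (hpos : ∀ j, 0 < w j) (hmono : ∀ i j : Fin m, i ≤ j → w j ≤ w i) :
    ∑ i ∈ (Finset.range (m + 1)).filter (fun i => 2 ^ i ≤ m),
        (∑ j ∈ Finset.univ.filter (fun j : Fin m => 2 ^ i - 1 ≤ (j : ℕ)), w j) ≥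
      ∑ j : Fin m, (1 / 2) * w j * (1 + Real.logb 2 ((∑ l : Fin m, w l) / w j)) := by
  rcases Nat.eq_zero_or_pos m with rfl | hm
  · simp
  rw [ge_iff_le]
  have hLHS : ∑ i ∈ (Finset.range (m + 1)).filter (fun i => 2 ^ i ≤ m),
        (∑ j ∈ Finset.univ.filter (fun j : Fin m => 2 ^ i - 1 ≤ (j : ℕ)), w j)
      = ∑ j : Fin m, ((Nat.log 2 ((j:ℕ)+1) : ℝ) + 1) * w j := by
    calc ∑ i ∈ (Finset.range (m + 1)).filter (fun i => 2 ^ i ≤ m),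
          (∑ j ∈ Finset.univ.filter (fun j : Fin m => 2 ^ i - 1 ≤ (j : ℕ)), w j)
        = ∑ i ∈ (Finset.range (m + 1)).filter (fun i => 2 ^ i ≤ m),
          ∑ j : Fin m, if 2 ^ i - 1 ≤ (j : ℕ) then w j else 0 := by
          simp [Finset.sum_filter]
      _ = ∑ j : Fin m, ∑ i ∈ (Finset.range (m + 1)).filter (fun i => 2 ^ i ≤ m),
            if 2 ^ i - 1 ≤ (j : ℕ) then w j else 0 := Finset.sum_comm
      _ = ∑ j : Fin m, ((Nat.log 2 ((j:ℕ)+1) : ℝ) + 1) * w j := by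
          refine Finset.sum_congr rfl fun j _ => ?_
          rw [← Finset.sum_filter, count_lemma m j, Finset.sum_const, Finset.card_range]
          ring
  rw [hLHS]
  have hq : ∑ j : Fin m, ((2:ℝ)^(2*Nat.log 2 ((j:ℕ)+1)+1))⁻¹ ≤ 1 := by
    rw [Fin.sum_univ_eq_sum_range (fun j => ((2:ℝ)^(2*Nat.log 2 (j+1)+1))⁻¹)]
    exact qsum m
  set W := ∑ l : Fin m, w l with hW
  have hWpos : 0 < W := Finset.sum_pos (fun i _ => hpos i)
    (Finset.univ_nonempty_iff.mpr (Fin.pos_iff_nonempty.mp hm))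
  set q : Fin m → ℝ := fun j => ((2:ℝ)^(2*Nat.log 2 ((j:ℕ)+1)+1))⁻¹ with hqdef
  have hqpos : ∀ j, 0 < q j := fun j => by positivity
  have key : ∀ j : Fin m, (1 / 2) * w j * (1 + Real.logb 2 (W / w j)) =
      ((Nat.log 2 ((j:ℕ)+1) : ℝ) + 1) * w j
        + (1/2) * (w j * Real.logb 2 (W * q j / w j)) := by
    intro j
    have hwj := hpos j
    have harg : W / w j = (W * q j / w j) * (2:ℝ)^(2*Nat.log 2 ((j:ℕ)+1)+1) := by
      rw [hqdef]
      field_simp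
    rw [harg, Real.logb_mul (by positivity) (by positivity), Real.logb_pow,
      Real.logb_self_eq_one (by norm_num : (1:ℝ) < 2)]
    push_cast
    ring
  have gibbs : ∑ j : Fin m, w j * Real.logb 2 (W * q j / w j) ≤ 0 := by
    have hterm : ∀ j : Fin m, w j * Real.logb 2 (W * q j / w j) ≤
        (W * q j - w j) / Real.log 2 := by
      intro j
      have hwj := hpos j
      have hx : (0:ℝ) < W * q j / w j := by positivity
      have hlog := Real.log_le_sub_one_of_pos hx
      have hl2 : (0:ℝ) < Real.log 2 := Real.log_pos (by norm_num)
      rw [Real.logb, div_eq_mul_inv]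
      have : w j * (Real.log (W * q j / w j) * (Real.log 2)⁻¹) ≤
          w j * ((W * q j / w j - 1) * (Real.log 2)⁻¹) := by
        apply mul_le_mul_of_nonneg_left _ hwj.le
        apply mul_le_mul_of_nonneg_right hlog (by positivity)
      refine le_trans this (le_of_eq ?_)
      field_simp
    refine le_trans (Finset.sum_le_sum fun j _ => hterm j) ?_
    have : ∑ j : Fin m, (W * q j - w j) / Real.log 2
        = (W * (∑ j : Fin m, q j) - W) / Real.log 2 := by
      rw [← Finset.sum_div, Finset.mul_sum, Finset.sum_sub_distrib]
    rw [this]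
    apply div_nonpos_of_nonpos_of_nonneg _ (Real.log_nonneg (by norm_num))
    nlinarith [hq]
  calc ∑ j : Fin m, (1 / 2) * w j * (1 + Real.logb 2 (W / w j))
      = ∑ j : Fin m, ((Nat.log 2 ((j:ℕ)+1) : ℝ) + 1) * w j
        + (1/2) * ∑ j : Fin m, w j * Real.logb 2 (W * q j / w j) := by
        rw [Finset.mul_sum, ← Finset.sum_add_distrib]
        exact Finset.sum_congr rfl fun j _ => key j
    _ ≤ ∑ j : Fin m, ((Nat.log 2 ((j:ℕ)+1) : ℝ) + 1) * w j := by nlinarith [gibbs]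
end

section
/- For the star K_{1,n-1} with unit edge lengths, any hierarchical clustering formed by recursively splitting the tree on its edges (so each cluster at each level is a connected subtree, and one split removes a single leaf at a time) has total spanning-tree weight Ω(n²), whereas there exists a hierarchical clustering (balanced binary splitting of the leaves) with total weight O(n log n). -/
open Finset

/-- The minimum spanning tree length of a subset `S` of the points of the star
`K_{1,n-1}` with unit edge lengths, where point `0` is the center: in the induced
metric, the center is at distance `1` from each leaf and leaves are at distance `2`
from each other. -/
def mstStar (n : ℕ) (S : Finset (Fin n)) : ℕ :=
  if hn : n = 0 then 0
  else if S.card ≤ 1 then 0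
  else if (⟨0, Nat.pos_of_ne_zero hn⟩ : Fin n) ∈ S then S.card - 1
  else 2 * (S.card - 1)

/-- Hierarchical clusterings of a finite set of points, indexed by the cluster of all
its points: a binary tree whose leaves are singletons, each internal node merging two
disjoint clusters. -/
inductive HClust (n : ℕ) : Finset (Fin n) → Type
  | single (x : Fin n) : HClust n {x}
  | merge {A B : Finset (Fin n)} (hd : Disjoint A B)
      (l : HClust n A) (r : HClust n B) : HClust n (A ∪ B)

/-- The cost of a hierarchical clustering of points of the star `K_{1,n-1}`: the sum
over all clusters of the minimum spanning tree length of the cluster. -/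
def HClust.cost : {n : ℕ} → {S : Finset (Fin n)} → HClust n S → ℕ
  | _, _, .single _ => 0
  | n, _, .merge (A := A) (B := B) _ l r => mstStar n (A ∪ B) + l.cost + r.cost

/-- A hierarchical clustering is formed by recursively splitting the star on its edges
iff each cluster is split by removing a single leaf at a time (so each cluster at each
level is a connected subtree of the star). -/
def HClust.EdgeSplit : {n : ℕ} → {S : Finset (Fin n)} → HClust n S → Prop
  | _, _, .single _ => True
  | _, _, .merge (A := A) (B := B) _ l r =>
      (A.card = 1 ∨ B.card = 1) ∧ l.EdgeSplit ∧ r.EdgeSplit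

/-!
An edge split peels a single point off a cluster of size `m`, whose spanning tree still has
weight at least `m - 1`; so the cluster sizes along the chain `n, n - 1, …` already cost
`∑ (m - 1) = n.choose 2`. Halving the clusters instead, a cluster of size `m` costs less than
`2 m`, so each level of the resulting tree costs less than `2 n`, and there are only
`⌊log₂ n⌋ + 1` levels.
-/

lemma card_sub_one_le_mstStar (n : ℕ) (S : Finset (Fin n)) : #S - 1 ≤ mstStar n S := by
  unfold mstStar
  split_ifs with hn
  · subst hn
    simp [Subsingleton.elim S ∅]
  all_goals omega

lemma mstStar_le_two_mul_card_sub_one (n : ℕ) (S : Finset (Fin n)) :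
    mstStar n S ≤ 2 * (#S - 1) := by
  unfold mstStar
  split_ifs <;> omega

lemma Nat.choose_two_add_le_of_eq_one_or_eq_one {a b : ℕ} (h : a = 1 ∨ b = 1) :
    (a + b).choose 2 ≤ (a + b - 1) + a.choose 2 + b.choose 2 := by
  rcases h with rfl | rfl
  · rw [add_comm, Nat.choose_succ_succ']
    simp
  · rw [Nat.choose_succ_succ']
    simp

theorem HClust.EdgeSplit.choose_two_le_cost {n : ℕ} {S : Finset (Fin n)} {hc : HClust n S}
    (he : hc.EdgeSplit) : (#S).choose 2 ≤ hc.cost := by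
  induction hc with
  | single x => simp [HClust.cost]
  | @merge A B hd l r ihl ihr =>
    rw [HClust.EdgeSplit] at he
    obtain ⟨hsplit, hl, hr⟩ := he
    have hmst := card_sub_one_le_mstStar n (A ∪ B)
    rw [card_union_of_disjoint hd] at hmst ⊢
    have hchoose := Nat.choose_two_add_le_of_eq_one_or_eq_one hsplit
    have hcl := ihl hl
    have hcr := ihr hr
    simp only [HClust.cost]
    omega

lemma Finset.exists_disjoint_union_eq_card_eq_half {α : Type*} [DecidableEq α]
    (S : Finset α) :
    ∃ A B : Finset α, Disjoint A B ∧ A ∪ B = S ∧ #A = #S / 2 ∧ #B = #S - #S / 2 := by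
  obtain ⟨A, hAS, hA⟩ := exists_subset_card_eq (Nat.div_le_self #S 2)
  exact ⟨A, S \ A, disjoint_sdiff, union_sdiff_of_subset hAS, hA,
    by rw [card_sdiff_of_subset hAS, hA]⟩

theorem HClust.exists_cost_le_of_card_le_two_pow {n : ℕ} (k : ℕ) (S : Finset (Fin n))
    (hS : S.Nonempty) (hSk : #S ≤ 2 ^ k) : ∃ hc : HClust n S, hc.cost ≤ 2 * #S * k := by
  induction k generalizing S with
  | zero =>
    obtain ⟨x, rfl⟩ := card_eq_one.mp (le_antisymm (by simpa using hSk) hS.card_pos)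
    exact ⟨.single x, by simp [HClust.cost]⟩
  | succ k ih =>
    obtain hS1 | hS2 := le_or_gt #S 1
    · obtain ⟨x, rfl⟩ := card_eq_one.mp (le_antisymm hS1 hS.card_pos)
      exact ⟨.single x, by simp [HClust.cost]⟩
    obtain ⟨A, B, hd, rfl, hA, hB⟩ := S.exists_disjoint_union_eq_card_eq_half
    rw [pow_succ] at hSk
    obtain ⟨l, hl⟩ := ih A (card_pos.mp (by omega)) (by omega)
    obtain ⟨r, hr⟩ := ih B (card_pos.mp (by omega)) (by omega)
    refine ⟨.merge hd l r, ?_⟩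
    have hmst := mstStar_le_two_mul_card_sub_one n (A ∪ B)
    rw [HClust.cost, card_union_of_disjoint hd]
    rw [card_union_of_disjoint hd] at hmst
    calc mstStar n (A ∪ B) + l.cost + r.cost
        ≤ 2 * (#A + #B) + 2 * #A * k + 2 * #B * k := by omega
      _ = 2 * (#A + #B) * (k + 1) := by ring

lemma Nat.log_two_add_one_le_two_mul_logb {n : ℕ} (hn : 2 ≤ n) :
    (Nat.log 2 n + 1 : ℝ) ≤ 2 * Real.logb 2 n := by
  have hlog : (1 : ℝ) ≤ Nat.log 2 n := mod_cast Nat.log_pos one_lt_two hn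
  have := Real.natLog_le_logb n 2
  push_cast at this
  linarith

/-- For the star `K_{1,n-1}` with unit edge lengths, any hierarchical clustering formed
by recursively splitting the tree on its edges has total spanning-tree weight `Ω(n²)`,
whereas some hierarchical clustering (balanced binary splitting) has total weight
`O(n log n)`. -/
theorem star_edge_split_quadratic_and_balanced_nlogn :
    (∃ c : ℝ, 0 < c ∧ ∀ n : ℕ, 2 ≤ n → ∀ hc : HClust n Finset.univ,
      hc.EdgeSplit → c * (n : ℝ) ^ 2 ≤ (hc.cost : ℝ)) ∧
    (∃ C : ℝ, 0 < C ∧ ∀ n : ℕ, 2 ≤ n → ∃ hc : HClust n Finset.univ,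
      (hc.cost : ℝ) ≤ C * (n : ℝ) * Real.logb 2 (n : ℝ)) := by
  refine ⟨⟨1 / 4, by norm_num, fun n hn hc he => ?_⟩, ⟨4, by norm_num, fun n hn => ?_⟩⟩
  · have hcost : (n.choose 2 : ℝ) ≤ hc.cost := by
      exact_mod_cast card_fin n ▸ he.choose_two_le_cost
    rw [Nat.cast_choose_two] at hcost
    have hn' : (2 : ℝ) ≤ n := mod_cast hn
    nlinarith
  · have hn2 : n ≤ 2 ^ (Nat.log 2 n + 1) := (Nat.lt_pow_succ_log_self one_lt_two n).le
    obtain ⟨hc, hcost⟩ := HClust.exists_cost_le_of_card_le_two_pow (n := n) (Nat.log 2 n + 1)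
      univ (univ_nonempty_iff.mpr ⟨⟨0, by omega⟩⟩) (by simpa using hn2)
    refine ⟨hc, ?_⟩
    rw [card_fin] at hcost
    have hlog := Nat.log_two_add_one_le_two_mul_logb hn
    have hcost' : (hc.cost : ℝ) ≤ 2 * n * (Nat.log 2 n + 1) := mod_cast hcost
    have hn0 : (0 : ℝ) ≤ n := n.cast_nonneg
    nlinarith
end

section
/- Let S' be a maximal subset of a convex region such that all pairwise distances in S' are at least ε and S' has the same convex hull as a given set S; then every edge of the minimum spanning tree of S' has length at least ε and at most 2ε. -/
open SimpleGraph

/-- The total length of (the edges of) a graph `T` on the points of a finite set `S` of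
a metric space. -/
noncomputable def graphLength {α : Type} [PseudoMetricSpace α] (S : Finset α)
    (T : SimpleGraph S) : ℝ :=
  letI : Fintype T.edgeSet := Fintype.ofFinite _
  ∑ e ∈ T.edgeFinset,
    Sym2.lift ⟨fun (a b : S) => dist (a : α) (b : α), fun _ _ => dist_comm _ _⟩ e

/-- In a connected graph, after deleting an edge `s(u,v)`, every vertex can still reach
`u` or `v`. -/
lemma reach_or_of_deleteEdge {V : Type*} {T : SimpleGraph V} {u v : V}
    (hc : T.Connected) (y : V) :
    (T \ fromEdgeSet {s(u, v)}).Reachable y u ∨ (T \ fromEdgeSet {s(u, v)}).Reachable y v := by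
  have aux : ∀ {a c : V} (_ : T.Walk a c),
      (T \ fromEdgeSet {s(u, v)}).Reachable a c ∨
      (T \ fromEdgeSet {s(u, v)}).Reachable a u ∨
      (T \ fromEdgeSet {s(u, v)}).Reachable a v := by
    intro a c p
    induction p with
    | nil => exact Or.inl (Reachable.refl _)
    | @cons a b c h q ih =>
      by_cases he : s(a, b) = s(u, v)
      · rw [Sym2.eq_iff] at he
        rcases he with ⟨rfl, rfl⟩ | ⟨rfl, rfl⟩
        · exact Or.inr (Or.inl (Reachable.refl _))
        · exact Or.inr (Or.inr (Reachable.refl _))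
      · have hadj : (T \ fromEdgeSet {s(u, v)}).Adj a b := by
          simp only [sdiff_adj, fromEdgeSet_adj, Set.mem_singleton_iff]
          exact ⟨h, fun hh => he hh.1⟩
        rcases ih with r | r | r
        · exact Or.inl (hadj.reachable.trans r)
        · exact Or.inr (Or.inl (hadj.reachable.trans r))
        · exact Or.inr (Or.inr (hadj.reachable.trans r))
  obtain ⟨p⟩ := hc y u
  rcases aux p with r | r | r
  · exact Or.inl r
  · exact Or.inl r
  · exact Or.inr r

/-- Edge-swap lemma: in a tree `T` with edge `s(u,v)`, if `x ≠ v` reaches `u` after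
deleting that edge, then replacing `s(u,v)` by `s(x,v)` gives another tree. -/
lemma exists_swap_tree {V : Type*} {T : SimpleGraph V} (hT : T.IsTree) {u v x : V}
    (huv : T.Adj u v) (hxv : x ≠ v)
    (hxu : (T \ fromEdgeSet {s(u, v)}).Reachable x u) :
    ∃ T' : SimpleGraph V, T'.IsTree ∧
      T'.edgeSet = insert s(x, v) (T.edgeSet \ {s(u, v)}) := by
  classical
  set D : SimpleGraph V := T \ fromEdgeSet {s(u, v)} with hD
  have hbridge : ¬ D.Reachable u v :=
    ((isAcyclic_iff_forall_adj_isBridge.mp hT.IsAcyclic) huv)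
  have hDle : D ≤ T := sdiff_le
  set F : SimpleGraph V := fromEdgeSet {s(x, v)} with hF
  refine ⟨D ⊔ F, ⟨?_, ?_⟩, ?_⟩
  · -- connected
    have hFadj : (D ⊔ F).Adj x v := Or.inr (by simp [hF, fromEdgeSet_adj, hxv])
    have hreach : ∀ y : V, (D ⊔ F).Reachable y v := by
      intro y
      rcases reach_or_of_deleteEdge (u := u) (v := v) hT.isConnected y with h | h
      · exact ((h.mono le_sup_left).trans ((hxu.symm.mono le_sup_left))).trans
          hFadj.reachable
      · exact h.mono le_sup_left
    have : Nonempty V := ⟨v⟩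
    exact ⟨fun a b => (hreach a).trans (hreach b).symm⟩
  · -- acyclic
    intro w c hc
    by_cases hmem : s(x, v) ∈ c.edges
    · have hr : ((D ⊔ F) \ fromEdgeSet {s(x, v)}).Reachable x v :=
        (adj_and_reachable_delete_edges_iff_exists_cycle.mpr ⟨w, c, hc, hmem⟩).2
      have hle : (D ⊔ F) \ fromEdgeSet {s(x, v)} ≤ D := by
        intro a b hab
        simp only [sdiff_adj, sup_adj, hF] at hab
        rcases hab with ⟨h1 | h1, h2⟩
        · exact h1
        · exact absurd h1 h2
      exact hbridge (hxu.symm.trans (hr.mono hle))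
    · have hsub : ∀ e ∈ c.edges, e ∈ T.edgeSet := by
        intro e he
        have hh := c.edges_subset_edgeSet he
        rw [edgeSet_sup] at hh
        rcases hh with h | h
        · exact (edgeSet_subset_edgeSet.mpr hDle) h
        · exfalso
          have he' : e = s(x, v) := by
            rw [hF, edgeSet_fromEdgeSet] at h
            simpa using h.1
          exact hmem (he' ▸ he)
      exact hT.IsAcyclic (c.transfer T hsub) (hc.transfer hsub)
  · -- edge set
    rw [edgeSet_sup, hF, edgeSet_fromEdgeSet, hD, edgeSet_sdiff, edgeSet_fromEdgeSet]
    have h1 : ({s(x, v)} : Set (Sym2 V)) \ {e | e.IsDiag} = {s(x, v)} := by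
      ext e
      simp only [Set.mem_diff, Set.mem_singleton_iff, Set.mem_setOf_eq,
        and_iff_left_iff_imp]
      rintro rfl
      simp [hxv]
    have h2 : ({s(u, v)} : Set (Sym2 V)) \ {e | e.IsDiag} = {s(u, v)} := by
      ext e
      simp only [Set.mem_diff, Set.mem_singleton_iff, Set.mem_setOf_eq,
        and_iff_left_iff_imp]
      rintro rfl
      simp [huv.ne]
    rw [Sym2.diagSet_eq_setOfPred_isDiag, h1, h2, Set.union_singleton]

/-- Let `S'` be a subset of a real normed space with all pairwise distances at least
`ε`, having the same convex hull as a given set `S`, and maximal with respect to adding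
points of that convex hull subject to the separation constraint.  Then every edge of
the minimum spanning tree of `S'` has length at least `ε` and at most `2ε`. -/
theorem mst_edge_lengths_of_maximal_separated {E : Type} [NormedAddCommGroup E]
    [NormedSpace ℝ E] (S : Set E) (ε : ℝ) (hε : 0 < ε) (S' : Finset E)
    (hhull : convexHull ℝ (S' : Set E) = convexHull ℝ S)
    (hsep : ∀ x ∈ S', ∀ y ∈ S', x ≠ y → ε ≤ dist x y)
    (hmax : ∀ z ∈ convexHull ℝ S, (∀ x ∈ S', z ≠ x → ε ≤ dist z x) → z ∈ S')
    (T : SimpleGraph S') (hT : T.IsTree)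
    (hmin : ∀ T' : SimpleGraph S', T'.IsTree → graphLength S' T ≤ graphLength S' T') :
    ∀ u v : S', T.Adj u v → ε ≤ dist (u : E) (v : E) ∧ dist (u : E) (v : E) ≤ 2 * ε := by
  classical
  intro u v huv
  have hne : (u : E) ≠ (v : E) := fun h => huv.ne (Subtype.ext h)
  refine ⟨hsep u u.2 v v.2 hne, ?_⟩
  by_contra hbig
  push_neg at hbig
  -- the midpoint
  set m : E := midpoint ℝ (u : E) (v : E) with hm
  have hmu : dist m (u : E) = dist (u : E) (v : E) / 2 := by
    have h := dist_left_midpoint (𝕜 := ℝ) (u : E) (v : E)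
    rw [hm, _root_.dist_comm, h, show ‖(2 : ℝ)‖ = 2 by norm_num]
    ring
  have hmv : dist m (v : E) = dist (u : E) (v : E) / 2 := by
    have h := dist_midpoint_right (𝕜 := ℝ) (u : E) (v : E)
    rw [hm, h, show ‖(2 : ℝ)‖ = 2 by norm_num]
    ring
  have hmugt : ε < dist m (u : E) := by rw [hmu]; linarith
  have hmvgt : ε < dist m (v : E) := by rw [hmv]; linarith
  have hmhull : m ∈ convexHull ℝ S := by
    rw [← hhull]
    have hu : (u : E) ∈ convexHull ℝ (S' : Set E) := subset_convexHull ℝ _ u.2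
    have hv : (v : E) ∈ convexHull ℝ (S' : Set E) := subset_convexHull ℝ _ v.2
    exact (convex_convexHull ℝ _).segment_subset hu hv (midpoint_mem_segment _ _)
  -- find a point x of S' distinct from u, v which is closer to both u and v
  have hx : ∃ x : S', x ≠ u ∧ x ≠ v ∧
      dist (u : E) (x : E) < dist (u : E) (v : E) ∧
      dist (v : E) (x : E) < dist (u : E) (v : E) := by
    by_cases hclose : ∃ z ∈ S', dist m z < ε
    · obtain ⟨z, hz, hzd⟩ := hclose
      refine ⟨⟨z, hz⟩, ?_, ?_, ?_, ?_⟩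
      · intro h
        rw [show z = (u : E) from congrArg Subtype.val h] at hzd
        linarith
      · intro h
        rw [show z = (v : E) from congrArg Subtype.val h] at hzd
        linarith
      · calc dist (u : E) z ≤ dist (u : E) m + dist m z := dist_triangle _ _ _
          _ < dist (u : E) (v : E) / 2 + ε := by
              rw [_root_.dist_comm (u : E) m, hmu]; linarith
          _ < dist (u : E) (v : E) := by linarith
      · calc dist (v : E) z ≤ dist (v : E) m + dist m z := dist_triangle _ _ _
          _ < dist (u : E) (v : E) / 2 + ε := by
              rw [_root_.dist_comm (v : E) m, hmv]; linarith
          _ < dist (u : E) (v : E) := by linarith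
    · push_neg at hclose
      have hmem : m ∈ S' := hmax m hmhull (fun z hz _ => hclose z hz)
      refine ⟨⟨m, hmem⟩, ?_, ?_, ?_, ?_⟩
      · intro h
        rw [show m = (u : E) from congrArg Subtype.val h, _root_.dist_self] at hmugt
        linarith
      · intro h
        rw [show m = (v : E) from congrArg Subtype.val h, _root_.dist_self] at hmvgt
        linarith
      · have hcoe : ((⟨m, hmem⟩ : {x // x ∈ S'}) : E) = m := rfl
        rw [hcoe, _root_.dist_comm, hmu]; linarith
      · have hcoe : ((⟨m, hmem⟩ : {x // x ∈ S'}) : E) = m := rfl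
        rw [hcoe, _root_.dist_comm, hmv]; linarith
  obtain ⟨x, hxu, hxv, hdxu, hdxv⟩ := hx
  -- pick the endpoint of the edge on the same side as `x`
  have key : ∃ (a b : S'), s(a, b) = s(u, v) ∧
      dist (x : E) (b : E) < dist (u : E) (v : E) ∧
      x ≠ b ∧ (T \ fromEdgeSet {s(a, b)}).Reachable x a := by
    rcases reach_or_of_deleteEdge (u := u) (v := v) hT.isConnected x with h | h
    · exact ⟨u, v, rfl, by rwa [_root_.dist_comm (x : E) (v : E)], hxv, h⟩
    · refine ⟨v, u, Sym2.eq_swap, by rwa [_root_.dist_comm (x : E) (u : E)], hxu, ?_⟩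
      rwa [Sym2.eq_swap]
  obtain ⟨a, b, hab, hdist, hxb, hreach⟩ := key
  have hTab : T.Adj a b := by
    have : s(a, b) ∈ T.edgeSet := by rw [hab]; exact huv
    exact this
  obtain ⟨T', hT', hedge⟩ := exists_swap_tree hT hTab hxb hreach
  -- length bookkeeping
  set f : Sym2 S' → ℝ :=
    Sym2.lift ⟨fun (a b : S') => dist (a : E) (b : E), fun _ _ => dist_comm _ _⟩ with hf
  letI iT : Fintype T.edgeSet := Fintype.ofFinite _
  letI iT' : Fintype T'.edgeSet := Fintype.ofFinite _
  have hLenT : graphLength S' T = ∑ e ∈ T.edgeFinset, f e := by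
    rw [graphLength]
  have hLenT' : graphLength S' T' = ∑ e ∈ T'.edgeFinset, f e := by
    rw [graphLength]
  have hab_mem : s(a, b) ∈ T.edgeFinset := mem_edgeFinset.mpr hTab
  have hxb_not : s(x, b) ∉ T.edgeFinset.erase s(a, b) := by
    intro h
    have h1 : s(x, b) ≠ s(a, b) := Finset.ne_of_mem_erase h
    have h2 : T.Adj x b := mem_edgeFinset.mp (Finset.mem_of_mem_erase h)
    have hDadj : (T \ fromEdgeSet {s(a, b)}).Adj x b := by
      simp only [sdiff_adj, fromEdgeSet_adj, Set.mem_singleton_iff]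
      exact ⟨h2, fun hh => h1 hh.1⟩
    have hbr : ¬ (T \ fromEdgeSet {s(a, b)}).Reachable a b :=
      ((isAcyclic_iff_forall_adj_isBridge.mp hT.IsAcyclic) hTab)
    exact hbr (hreach.symm.trans hDadj.reachable)
  have hfin' : T'.edgeFinset = insert s(x, b) (T.edgeFinset.erase s(a, b)) := by
    ext e
    rw [mem_edgeFinset]
    have : e ∈ T'.edgeSet ↔ e ∈ insert s(x, b) (T.edgeSet \ {s(a, b)}) := by rw [hedge]
    rw [this]
    simp [Finset.mem_insert, Finset.mem_erase, mem_edgeFinset, Set.mem_insert_iff,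
      Set.mem_diff, and_comm]
  have hsum' : graphLength S' T' = f s(x, b) + (graphLength S' T - f s(a, b)) := by
    rw [hLenT', hLenT, hfin', Finset.sum_insert hxb_not,
      ← Finset.add_sum_erase _ f hab_mem]
    ring
  have hfab : f s(a, b) = dist (u : E) (v : E) := by
    rw [hab]
    simp [hf]
  have hfxb : f s(x, b) = dist (x : E) (b : E) := by simp [hf]
  have := hmin T' hT'
  rw [hsum', hfab, hfxb] at this
  linarith
end
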